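/- arXiv:1212.1521 — 4 statements merged into one kernel-verified Lean document; each statement's English description precedes it below -/
import Mathlib

section
/- Let X_1,…,X_k be n×n matrices over the max-plus semiring having a common associated acyclic graph, let p be the length of the longest path in that graph, and suppose ‖X_i‖ ≥ 0 for all i = 1,…,k. Then for any nonnegative integers m_1,…,m_k, ‖(E ⊕ X_1)^{⊗m_1} ⊗ ⋯ ⊗ (E ⊕ X_k)^{⊗m_k}‖ ≤ (‖X_1‖ ⊕ ⋯ ⊕ ‖X_k‖)^{⊗p} = p · max_{1≤i≤k} ‖X_i‖. -/
/-- The max-plus carrier set `ℝ ∪ {ε}` with `ε = -∞`, realized as `WithBot ℝ`.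
The max-plus addition `⊕` is `⊔` (max, with `ε` as null element) and the
max-plus multiplication `⊗` is `+` (with `x + ⊥ = ⊥ + x = ⊥`). -/
abbrev MP : Type := WithBot ℝ

/-- Max-plus matrix product: `(X ⊗ Y) i j = max_k (X i k + Y k j)`. -/
noncomputable def mpMul {n : ℕ} (X Y : Matrix (Fin n) (Fin n) MP) : Matrix (Fin n) (Fin n) MP :=
  Matrix.of fun i j => Finset.univ.sup fun k => X i k + Y k j

/-- Max-plus matrix sum: entrywise maximum. -/
noncomputable def mpAdd {n : ℕ} (X Y : Matrix (Fin n) (Fin n) MP) : Matrix (Fin n) (Fin n) MP :=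
  Matrix.of fun i j => X i j ⊔ Y i j

/-- The max-plus identity matrix `E`: `0` on the diagonal, `ε` off the diagonal. -/
noncomputable def mpOne (n : ℕ) : Matrix (Fin n) (Fin n) MP :=
  Matrix.of fun i j => if i = j then (0 : MP) else ⊥

/-- Max-plus matrix power: `X^{⊗0} = E`, `X^{⊗(q+1)} = X ⊗ X^{⊗q}`. -/
noncomputable def mpPow {n : ℕ} (X : Matrix (Fin n) (Fin n) MP) : ℕ → Matrix (Fin n) (Fin n) MP
  | 0 => mpOne n
  | q + 1 => mpMul X (mpPow X q)

/-- Max-plus matrix norm: `‖X‖ = max_{i,j} X i j`. -/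
noncomputable def mpNorm {n : ℕ} (X : Matrix (Fin n) (Fin n) MP) : MP :=
  Finset.univ.sup fun i => Finset.univ.sup fun j => X i j

/-- A path of exactly `q` edges from `i` to `j` in the directed graph with
adjacency relation `Adj`. -/
def AdjPath {n : ℕ} (Adj : Fin n → Fin n → Prop) (q : ℕ) (i j : Fin n) : Prop :=
  ∃ f : ℕ → Fin n, f 0 = i ∧ f q = j ∧ ∀ t < q, Adj (f t) (f (t + 1))

/-- A path of exactly `q` edges from `i` to `j` in the graph associated with the
matrix `X` (an edge `(i,j)` exists precisely when `X i j ≠ ε`). -/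
def mpPath {n : ℕ} (X : Matrix (Fin n) (Fin n) MP) (q : ℕ) (i j : Fin n) : Prop :=
  AdjPath (fun a b => X a b ≠ ⊥) q i j

/-- The graph associated with `X` is acyclic: no directed cycle. -/
def mpAcyclic {n : ℕ} (X : Matrix (Fin n) (Fin n) MP) : Prop :=
  ∀ i q, 1 ≤ q → ¬ mpPath X q i i

/-- The diagonal matrix `diag (d 1, …, d n)` over the max-plus semiring. -/
noncomputable def diagM {n : ℕ} (d : Fin n → ℝ) : Matrix (Fin n) (Fin n) MP :=
  Matrix.of fun i j => if i = j then ((d i : ℝ) : MP) else ⊥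

/-- Iterated max-plus product of a list of matrices (empty product is `E`). -/
noncomputable def mpProd {n : ℕ} : List (Matrix (Fin n) (Fin n) MP) → Matrix (Fin n) (Fin n) MP
  | [] => mpOne n
  | X :: L => mpMul X (mpProd L)

/-!
Every entry of `E ⊕ X_a`, and hence of any max-plus product of such matrices, is either `ε`
or bounded by `q • c`, where `c = max_a ‖X_a‖ ≥ 0` and `q` is the length of some path from its
row index to its column index: a product entry is a maximum of sums along concatenated paths, and
the non-`ε` entries of `X_a` are edges of the common graph. Since no path is longer
than `p` and `c ≥ 0`, every entry is at most `p • c`.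
-/

namespace AdjPath

variable {n : ℕ} {Adj : Fin n → Fin n → Prop}

theorem refl (i : Fin n) : AdjPath Adj 0 i i :=
  ⟨fun _ => i, rfl, rfl, fun _ ht => absurd ht (Nat.not_lt_zero _)⟩

theorem single {i j : Fin n} (h : Adj i j) : AdjPath Adj 1 i j :=
  ⟨fun t => if t = 0 then i else j, rfl, rfl, fun t ht => by
    obtain rfl : t = 0 := by omega
    simpa using h⟩

theorem trans {q₁ q₂ : ℕ} {i l j : Fin n} (h₁ : AdjPath Adj q₁ i l) (h₂ : AdjPath Adj q₂ l j) :
    AdjPath Adj (q₁ + q₂) i j := by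
  obtain ⟨f, rfl, rfl, hf⟩ := h₁
  obtain ⟨g, hg0, rfl, hg⟩ := h₂
  refine ⟨fun t => if t ≤ q₁ then f t else g (t - q₁), by simp, ?_, fun t ht => ?_⟩
  · rcases Nat.eq_zero_or_pos q₂ with rfl | hq₂
    · simp [hg0]
    · simp [show ¬ q₁ + q₂ ≤ q₁ by omega]
  · dsimp only
    by_cases hlt : t + 1 ≤ q₁
    · simpa [hlt, show t ≤ q₁ by omega] using hf t (by omega)
    by_cases heq : t = q₁
    · subst heq
      simpa [hg0] using hg 0 (by omega)
    · have hstep := hg (t - q₁) (by omega)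
      rw [show t - q₁ + 1 = t + 1 - q₁ by omega] at hstep
      simpa [hlt, show ¬ t ≤ q₁ by omega] using hstep

end AdjPath

section PathBounded

variable {n : ℕ} {Adj : Fin n → Fin n → Prop} {c : MP}

def PathBounded (Adj : Fin n → Fin n → Prop) (c : MP) (i j : Fin n) (x : MP) : Prop :=
  x = ⊥ ∨ ∃ q, AdjPath Adj q i j ∧ x ≤ q • c

def PathBoundedMatrix (Adj : Fin n → Fin n → Prop) (c : MP) (M : Matrix (Fin n) (Fin n) MP) :
    Prop :=
  ∀ i j, PathBounded Adj c i j (M i j)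

theorem PathBounded.sup (hc : 0 ≤ c) {i j : Fin n} {x y : MP}
    (hx : PathBounded Adj c i j x) (hy : PathBounded Adj c i j y) :
    PathBounded Adj c i j (x ⊔ y) := by
  rcases hx with rfl | ⟨q₁, hp₁, hb₁⟩
  · simpa using hy
  rcases hy with rfl | ⟨q₂, hp₂, hb₂⟩
  · rw [sup_bot_eq]
    exact Or.inr ⟨q₁, hp₁, hb₁⟩
  rcases le_total q₁ q₂ with h | h
  · exact Or.inr ⟨q₂, hp₂, sup_le (hb₁.trans (nsmul_le_nsmul_left hc h)) hb₂⟩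
  · exact Or.inr ⟨q₁, hp₁, sup_le hb₁ (hb₂.trans (nsmul_le_nsmul_left hc h))⟩

theorem PathBounded.add {i l j : Fin n} {x y : MP}
    (hx : PathBounded Adj c i l x) (hy : PathBounded Adj c l j y) :
    PathBounded Adj c i j (x + y) := by
  rcases hx with rfl | ⟨q₁, hp₁, hb₁⟩
  · simp [PathBounded]
  rcases hy with rfl | ⟨q₂, hp₂, hb₂⟩
  · simp [PathBounded]
  exact Or.inr ⟨q₁ + q₂, hp₁.trans hp₂, add_nsmul c q₁ q₂ ▸ add_le_add hb₁ hb₂⟩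

theorem pathBoundedMatrix_mpOne : PathBoundedMatrix Adj c (mpOne n) := by
  intro i j
  by_cases h : i = j
  · subst h
    exact Or.inr ⟨0, AdjPath.refl i, by simp [mpOne]⟩
  · exact Or.inl (by simp [mpOne, h])

theorem PathBoundedMatrix.mpMul (hc : 0 ≤ c) {M N : Matrix (Fin n) (Fin n) MP}
    (hM : PathBoundedMatrix Adj c M) (hN : PathBoundedMatrix Adj c N) :
    PathBoundedMatrix Adj c (mpMul M N) := fun i j =>
  show PathBounded Adj c i j (Finset.univ.sup fun l => M i l + N l j) from
  Finset.sup_induction (p := PathBounded Adj c i j) (Or.inl rfl)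
    (fun _ hx _ hy => hx.sup hc hy) fun l _ => (hM i l).add (hN l j)

theorem PathBoundedMatrix.mpAdd (hc : 0 ≤ c) {M N : Matrix (Fin n) (Fin n) MP}
    (hM : PathBoundedMatrix Adj c M) (hN : PathBoundedMatrix Adj c N) :
    PathBoundedMatrix Adj c (mpAdd M N) :=
  fun i j => (hM i j).sup hc (hN i j)

theorem PathBoundedMatrix.mpPow (hc : 0 ≤ c) {M : Matrix (Fin n) (Fin n) MP}
    (hM : PathBoundedMatrix Adj c M) (q : ℕ) : PathBoundedMatrix Adj c (mpPow M q) := by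
  induction q with
  | zero => exact pathBoundedMatrix_mpOne
  | succ q ih => exact hM.mpMul hc ih

theorem pathBoundedMatrix_mpProd (hc : 0 ≤ c) {L : List (Matrix (Fin n) (Fin n) MP)}
    (h : ∀ M ∈ L, PathBoundedMatrix Adj c M) : PathBoundedMatrix Adj c (mpProd L) := by
  induction L with
  | nil => exact pathBoundedMatrix_mpOne
  | cons M L ih =>
    exact (h M List.mem_cons_self).mpMul hc (ih fun N hN => h N (List.mem_cons_of_mem M hN))

theorem le_mpNorm (M : Matrix (Fin n) (Fin n) MP) (i j : Fin n) : M i j ≤ mpNorm M :=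
  (Finset.le_sup (f := fun j => M i j) (Finset.mem_univ j)).trans
    (Finset.le_sup (f := fun i => Finset.univ.sup fun j => M i j) (Finset.mem_univ i))

theorem pathBoundedMatrix_of_mpNorm_le {M : Matrix (Fin n) (Fin n) MP}
    (hAdj : ∀ i j, M i j ≠ ⊥ → Adj i j) (hM : mpNorm M ≤ c) : PathBoundedMatrix Adj c M := by
  intro i j
  by_cases h : M i j = ⊥
  · exact Or.inl h
  · exact Or.inr ⟨1, .single (hAdj i j h), by simpa using (le_mpNorm M i j).trans hM⟩

theorem PathBoundedMatrix.mpNorm_le (hc : 0 ≤ c) {p : ℕ}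
    (hp : ∀ q i j, AdjPath Adj q i j → q ≤ p) {M : Matrix (Fin n) (Fin n) MP}
    (hM : PathBoundedMatrix Adj c M) : mpNorm M ≤ p • c :=
  Finset.sup_le fun i _ => Finset.sup_le fun j _ => by
    rcases hM i j with h | ⟨q, hpath, hb⟩
    · simp [h]
    · exact hb.trans (nsmul_le_nsmul_left hc (hp q i j hpath))

end PathBounded

theorem stmt7_general {n k : ℕ} (hk : 0 < k) (X : Fin k → Matrix (Fin n) (Fin n) MP)
    (Adj : Fin n → Fin n → Prop)
    (hcommon : ∀ a i j, X a i j ≠ ⊥ ↔ Adj i j)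
    (p : ℕ)
    (hub : ∀ q i j, AdjPath Adj q i j → q ≤ p)
    (hnorm : ∀ i, (0 : MP) ≤ mpNorm (X i))
    (m : Fin k → ℕ) :
    mpNorm (mpProd (List.ofFn fun i => mpPow (mpAdd (mpOne n) (X i)) (m i)))
      ≤ p • (Finset.univ.sup fun i => mpNorm (X i)) := by
  set c : MP := Finset.univ.sup fun i => mpNorm (X i)
  have hle : ∀ a, mpNorm (X a) ≤ c := fun a =>
    Finset.le_sup (f := fun a => mpNorm (X a)) (Finset.mem_univ a)
  have hc : 0 ≤ c := (hnorm ⟨0, hk⟩).trans (hle _)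
  have hX : ∀ a, PathBoundedMatrix Adj c (X a) := fun a =>
    pathBoundedMatrix_of_mpNorm_le (fun i j => (hcommon a i j).mp) (hle a)
  refine PathBoundedMatrix.mpNorm_le hc hub (pathBoundedMatrix_mpProd hc fun M hM => ?_)
  obtain ⟨a, rfl⟩ := List.mem_ofFn.mp hM
  exact (pathBoundedMatrix_mpOne.mpAdd hc (hX a)).mpPow hc (m a)

/-- If `X_1,…,X_k` (`k ≥ 1`) have a common associated acyclic
graph with longest path length `p`, and `‖X_i‖ ≥ 0` for all `i`, then for all
nonnegative integers `m_1,…,m_k`,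
`‖(E ⊕ X_1)^{⊗m_1} ⊗ ⋯ ⊗ (E ⊕ X_k)^{⊗m_k}‖ ≤ (‖X_1‖ ⊕ ⋯ ⊕ ‖X_k‖)^{⊗p}`,
where the right-hand side is `p • max_i ‖X_i‖`. -/
theorem stmt7 {n k : ℕ} (hk : 0 < k) (X : Fin k → Matrix (Fin n) (Fin n) MP)
    (Adj : Fin n → Fin n → Prop)
    (hcommon : ∀ a i j, X a i j ≠ ⊥ ↔ Adj i j)
    (hacyc : ∀ i q, 1 ≤ q → ¬ AdjPath Adj q i i)
    (p : ℕ)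
    (hub : ∀ q i j, AdjPath Adj q i j → q ≤ p)
    (hex : ∃ i j, AdjPath Adj p i j)
    (hnorm : ∀ i, (0 : MP) ≤ mpNorm (X i))
    (m : Fin k → ℕ) :
    mpNorm (mpProd (List.ofFn fun i => mpPow (mpAdd (mpOne n) (X i)) (m i)))
      ≤ p • (Finset.univ.sup fun i => mpNorm (X i)) :=
  stmt7_general hk X Adj hcommon p hub hnorm m
end

section
/- Let ξ_1,…,ξ_k be independent and identically distributed real-valued random variables with finite mean E[ξ_1] and finite variance D[ξ_1]. Then E[max(ξ_1,…,ξ_k)] ≤ E[ξ_1] + ((k-1)/√(2k-1))·√(D[ξ_1]). -/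
/-!
Let `q` be the quantile function of `ξ₁`. Under the uniform measure on `(0, 1)`, `q` has the law
of `ξ₁`; since the cdf of the maximum is `Fᵏ`, the map `u ↦ q (u ^ (1/k))` has the law of the
maximum, and the substitution `u = vᵏ` gives `E[max] = ∫₀¹ w q` with `w v = k vᵏ⁻¹`. As `∫₀¹ w = 1`,
`E[max] - E[ξ₁]` is the covariance of `w` and `q` under the uniform measure, and Cauchy–Schwarz
bounds it by `√Var w · √Var q = (k - 1) / √(2k - 1) · √D[ξ₁]`.
-/

open MeasureTheory ProbabilityTheory Set Filter

lemma integral_mul_le_sqrt_mul_sqrt {α : Type*} [MeasurableSpace α] {μ : Measure α}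
    {f g : α → ℝ} (hf : MemLp f 2 μ) (hg : MemLp g 2 μ) :
    ∫ a, f a * g a ∂μ ≤ √(∫ a, f a ^ 2 ∂μ) * √(∫ a, g a ^ 2 ∂μ) := by
  have inner_toLp : ∀ {h₁ h₂ : α → ℝ} (h₁L : MemLp h₁ 2 μ) (h₂L : MemLp h₂ 2 μ),
      inner ℝ (h₁L.toLp h₁) (h₂L.toLp h₂) = ∫ a, h₁ a * h₂ a ∂μ := fun h₁L h₂L => by
    rw [L2.inner_def]
    refine integral_congr_ae ?_
    filter_upwards [h₁L.coeFn_toLp, h₂L.coeFn_toLp] with a h₁a h₂a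
    rw [h₁a, h₂a, real_inner_eq_re_inner, RCLike.inner_apply]
    simp [mul_comm]
  have norm_toLp : ∀ {h : α → ℝ} (hL : MemLp h 2 μ), ‖hL.toLp h‖ = √(∫ a, h a ^ 2 ∂μ) :=
    fun hL => by
      simp_rw [sq, ← inner_toLp hL hL, real_inner_self_eq_norm_sq, Real.sqrt_sq (norm_nonneg _)]
  rw [← inner_toLp hf hg, ← norm_toLp hf, ← norm_toLp hg]
  exact real_inner_le_norm _ _

lemma covariance_le_sqrt_variance_mul {Ω : Type*} [MeasurableSpace Ω] {μ : Measure Ω}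
    [IsFiniteMeasure μ] {X Y : Ω → ℝ} (hX : MemLp X 2 μ) (hY : MemLp Y 2 μ) :
    cov[X, Y; μ] ≤ √(Var[X; μ]) * √(Var[Y; μ]) := by
  rw [covariance, variance_eq_integral hX.aemeasurable, variance_eq_integral hY.aemeasurable]
  exact integral_mul_le_sqrt_mul_sqrt (hX.sub (memLp_const _)) (hY.sub (memLp_const _))

lemma rpow_mem_Ioo_zero_one {u r : ℝ} (hu : u ∈ Ioo 0 1) (hr : 0 < r) : u ^ r ∈ Ioo 0 1 :=
  ⟨Real.rpow_pos_of_pos hu.1 r, Real.rpow_lt_one hu.1.le hu.2 hr⟩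

instance : IsProbabilityMeasure (volume.restrict (Ioo (0 : ℝ) 1)) :=
  ⟨by simp⟩

namespace ProbabilityTheory

/-- Only meaningful for `u ∈ (0, 1)`: otherwise the set is empty or unbounded below and `sInf`
returns a junk value. -/
noncomputable def quantile (ν : Measure ℝ) (u : ℝ) : ℝ := sInf {x | u ≤ cdf ν x}

variable {ν : Measure ℝ} {u x : ℝ}

lemma quantile_le_iff (hu : u ∈ Ioo 0 1) : quantile ν u ≤ x ↔ u ≤ cdf ν x := by
  have hne : {x | u ≤ cdf ν x}.Nonempty :=
    ((tendsto_cdf_atTop ν).eventually (eventually_ge_nhds hu.2)).exists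
  have hbdd : BddBelow {x | u ≤ cdf ν x} := by
    obtain ⟨y, hy⟩ := ((tendsto_cdf_atBot ν).eventually (eventually_lt_nhds hu.1)).exists
    exact ⟨y, fun x hx => le_of_not_gt fun hxy => (((cdf ν).mono hxy.le).trans_lt hy).not_ge hx⟩
  refine ⟨fun h => ?_, fun h => csInf_le hbdd h⟩
  have le_cdf_quantile : u ≤ cdf ν (quantile ν u) := by
    refine ge_of_tendsto (((cdf ν).right_continuous _).mono Ioi_subset_Ici_self).tendsto ?_
    filter_upwards [self_mem_nhdsWithin] with y hy
    obtain ⟨s, hs, hsy⟩ := (csInf_lt_iff hbdd hne).1 hy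
    exact hs.trans ((cdf ν).mono hsy.le)
  exact le_cdf_quantile.trans ((cdf ν).mono h)

lemma monotoneOn_quantile : MonotoneOn (quantile ν) (Ioo 0 1) := fun _ hu _ hv huv =>
  (quantile_le_iff hu).2 (huv.trans ((quantile_le_iff hv).1 le_rfl))

lemma hasLaw_quantile [IsProbabilityMeasure ν] :
    HasLaw (quantile ν) ν (volume.restrict (Ioo 0 1)) := by
  have hmeas : AEMeasurable (quantile ν) (volume.restrict (Ioo 0 1)) :=
    aemeasurable_restrict_of_monotoneOn measurableSet_Ioo monotoneOn_quantile
  refine ⟨hmeas, Measure.ext_of_Iic _ _ fun x => ?_⟩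
  have hpre : quantile ν ⁻¹' Iic x ∩ Ioo 0 1 = Ioo 0 1 ∩ Iic (cdf ν x) := by
    ext u
    simp only [mem_inter_iff, mem_preimage, mem_Iic]
    exact ⟨fun h => ⟨h.2, (quantile_le_iff h.2).1 h.1⟩,
      fun h => ⟨(quantile_le_iff h.1).2 h.2, h.1⟩⟩
  rw [Measure.map_apply_of_aemeasurable hmeas measurableSet_Iic,
    Measure.restrict_apply' measurableSet_Ioo, hpre,
    measure_congr ((Ioo_ae_eq_Ioc (μ := volume)).inter (ae_eq_refl (Iic (cdf ν x)))),
    Ioc_inter_Iic, min_eq_right (cdf_le_one ν x), Real.volume_Ioc, sub_zero, ofReal_cdf]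

lemma quantile_eq_of_cdf_eq_pow {ρ : Measure ℝ} {k : ℕ} (hk : k ≠ 0)
    (hcdf : ∀ x, cdf ρ x = cdf ν x ^ k) (hu : u ∈ Ioo 0 1) :
    quantile ρ u = quantile ν (u ^ (k : ℝ)⁻¹) := by
  refine eq_of_forall_ge_iff fun x => ?_
  rw [quantile_le_iff hu, quantile_le_iff (rpow_mem_Ioo_zero_one hu (by positivity)), hcdf,
    Real.rpow_inv_le_iff_of_pos hu.1.le (cdf_nonneg ν x) (by positivity), Real.rpow_natCast]

end ProbabilityTheory

lemma setIntegral_Ioo_comp_rpow_inv {k : ℕ} (hk : k ≠ 0) (g : ℝ → ℝ) :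
    ∫ u in Ioo 0 1, g (u ^ (k : ℝ)⁻¹) = ∫ v in Ioo 0 1, k * v ^ (k - 1) * g v := by
  have himage : (· ^ k) '' Ioo (0 : ℝ) 1 = Ioo 0 1 := by
    refine Subset.antisymm ?_ fun u hu => ?_
    · rintro _ ⟨v, hv, rfl⟩
      exact ⟨pow_pos hv.1 k, pow_lt_one₀ hv.1.le hv.2 hk⟩
    · exact ⟨u ^ (k : ℝ)⁻¹, rpow_mem_Ioo_zero_one hu (by positivity),
        Real.rpow_inv_natCast_pow hu.1.le hk⟩
  have hinj : InjOn (· ^ k) (Ioo (0 : ℝ) 1) :=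
    (pow_left_strictMonoOn₀ hk).injOn.mono fun v hv => hv.1.le
  conv_lhs => rw [← himage]
  rw [integral_image_eq_integral_abs_deriv_smul measurableSet_Ioo
    (fun v _ => (hasDerivAt_pow k v).hasDerivWithinAt) hinj]
  refine setIntegral_congr_fun measurableSet_Ioo fun v hv => ?_
  rw [smul_eq_mul, Real.pow_rpow_inv_natCast hv.1.le hk,
    abs_of_nonneg (mul_nonneg k.cast_nonneg (pow_nonneg hv.1.le _))]

lemma setIntegral_Ioo_pow (n : ℕ) : ∫ v in Ioo (0 : ℝ) 1, v ^ n = 1 / (n + 1) := by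
  rw [← integral_Ioc_eq_integral_Ioo, ← intervalIntegral.integral_of_le zero_le_one, integral_pow]
  simp

lemma setIntegral_Ioo_natCast_mul_pow_pred {k : ℕ} (hk : k ≠ 0) :
    ∫ v in Ioo (0 : ℝ) 1, k * v ^ (k - 1) = 1 := by
  rw [integral_const_mul, setIntegral_Ioo_pow, Nat.cast_pred (Nat.pos_of_ne_zero hk)]
  field_simp
  simpa using hk

lemma memLp_natCast_mul_pow_pred (k : ℕ) (p : ENNReal) :
    MemLp (fun v : ℝ => k * v ^ (k - 1)) p (volume.restrict (Ioo 0 1)) := by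
  refine MemLp.of_bound (by fun_prop : Continuous _).aestronglyMeasurable k ?_
  filter_upwards [ae_restrict_mem measurableSet_Ioo] with v hv
  rw [Real.norm_eq_abs, abs_of_nonneg (by positivity [hv.1.le])]
  exact mul_le_of_le_one_right k.cast_nonneg (pow_le_one₀ hv.1.le hv.2.le)

lemma variance_natCast_mul_pow_pred {k : ℕ} (hk : k ≠ 0) :
    Var[fun v : ℝ => k * v ^ (k - 1); volume.restrict (Ioo 0 1)] = (k - 1) ^ 2 / (2 * k - 1) := by
  have h2k : (2 * k - 1 : ℝ) ≠ 0 := by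
    have : (1 : ℝ) ≤ k := Nat.one_le_cast.2 (Nat.pos_of_ne_zero hk)
    linarith
  rw [variance_eq_sub (memLp_natCast_mul_pow_pred k 2), setIntegral_Ioo_natCast_mul_pow_pred hk]
  simp_rw [Pi.pow_apply, mul_pow, ← pow_mul]
  rw [integral_const_mul, setIntegral_Ioo_pow]
  push_cast [Nat.cast_pred (Nat.pos_of_ne_zero hk)]
  rw [show ((k : ℝ) - 1) * 2 + 1 = 2 * k - 1 by ring, one_pow, mul_one_div, div_sub_one h2k]
  ring

lemma cdf_map_sup'_eq_pow {Ω ι : Type*} [MeasurableSpace Ω] {μ : Measure Ω}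
    [IsProbabilityMeasure μ] [Fintype ι] (hι : (Finset.univ : Finset ι).Nonempty)
    {ξ : ι → Ω → ℝ} (hmeas : ∀ i, Measurable (ξ i)) (hindep : iIndepFun ξ μ)
    {ν : Measure ℝ} (hident : ∀ i, μ.map (ξ i) = ν) (x : ℝ) :
    cdf (μ.map fun ω => Finset.univ.sup' hι fun i => ξ i ω) x = cdf ν x ^ Fintype.card ι := by
  have hsup : Measurable fun ω => Finset.univ.sup' hι fun i => ξ i ω := by fun_prop
  have : IsProbabilityMeasure ν :=
    hident hι.choose ▸ Measure.isProbabilityMeasure_map (hmeas _).aemeasurable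
  have := Measure.isProbabilityMeasure_map hsup.aemeasurable (μ := μ)
  have hpre : (fun ω => Finset.univ.sup' hι fun i => ξ i ω) ⁻¹' Iic x = ⋂ i, ξ i ⁻¹' Iic x := by
    ext ω
    simp [Finset.sup'_le_iff]
  rw [cdf_eq_real, cdf_eq_real, measureReal_def, measureReal_def,
    Measure.map_apply hsup measurableSet_Iic, hpre,
    hindep.meas_iInter fun i => ⟨Iic x, measurableSet_Iic, rfl⟩]
  simp_rw [← Measure.map_apply (hmeas _) measurableSet_Iic, hident]
  rw [Finset.prod_const, Finset.card_univ, ENNReal.toReal_pow]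

lemma integral_eq_setIntegral_mul_quantile_of_cdf_eq_pow {ρ ν : Measure ℝ}
    [IsProbabilityMeasure ρ] {k : ℕ} (hk : k ≠ 0) (hcdf : ∀ x, cdf ρ x = cdf ν x ^ k) :
    ∫ x, x ∂ρ = ∫ v in Ioo 0 1, k * v ^ (k - 1) * quantile ν v := by
  rw [← hasLaw_quantile.integral_eq, ← setIntegral_Ioo_comp_rpow_inv hk]
  exact setIntegral_congr_fun measurableSet_Ioo fun u hu => quantile_eq_of_cdf_eq_pow hk hcdf hu

lemma integral_sup'_eq_setIntegral_mul_quantile {Ω ι : Type*} [MeasurableSpace Ω]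
    {μ : Measure Ω} [IsProbabilityMeasure μ] [Fintype ι] (hι : (Finset.univ : Finset ι).Nonempty)
    {ξ : ι → Ω → ℝ} (hmeas : ∀ i, Measurable (ξ i)) (hindep : iIndepFun ξ μ)
    {ν : Measure ℝ} (hident : ∀ i, μ.map (ξ i) = ν) :
    ∫ ω, Finset.univ.sup' hι (fun i => ξ i ω) ∂μ
      = ∫ v in Ioo 0 1, Fintype.card ι * v ^ (Fintype.card ι - 1) * quantile ν v := by
  have hsup : Measurable fun ω => Finset.univ.sup' hι fun i => ξ i ω := by fun_prop
  have := Measure.isProbabilityMeasure_map hsup.aemeasurable (μ := μ)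
  rw [HasLaw.integral_eq ⟨hsup.aemeasurable, rfl⟩]
  have : Nonempty ι := Finset.univ_nonempty_iff.1 hι
  exact integral_eq_setIntegral_mul_quantile_of_cdf_eq_pow Fintype.card_ne_zero
    (cdf_map_sup'_eq_pow hι hmeas hindep hident)

/-- For i.i.d. real random variables `ξ_1,…,ξ_k` (`k ≥ 1`) with
finite mean and finite variance `D[ξ_1]`,
`E[max(ξ_1,…,ξ_k)] ≤ E[ξ_1] + ((k-1)/√(2k-1))·√(D[ξ_1])`. -/
theorem stmt9 {Ω : Type*} [MeasurableSpace Ω] (μ : Measure Ω)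
    [IsProbabilityMeasure μ] {k : ℕ} (hk : 0 < k)
    (ξ : Fin k → Ω → ℝ) (hmeas : ∀ i, Measurable (ξ i))
    (hindep : iIndepFun ξ μ)
    (hident : ∀ i, Measure.map (ξ i) μ = Measure.map (ξ ⟨0, hk⟩) μ)
    (hL2 : MemLp (ξ ⟨0, hk⟩) 2 μ) :
    ∫ ω, Finset.univ.sup' (Finset.univ_nonempty_iff.2 ⟨⟨0, hk⟩⟩) (fun i => ξ i ω) ∂μ
      ≤ (∫ ω, ξ ⟨0, hk⟩ ω ∂μ)
        + ((k : ℝ) - 1) / Real.sqrt (2 * (k : ℝ) - 1)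
          * Real.sqrt (variance (ξ ⟨0, hk⟩) μ) := by
  set ν := μ.map (ξ ⟨0, hk⟩)
  have : IsProbabilityMeasure ν := Measure.isProbabilityMeasure_map (hmeas _).aemeasurable
  have hlaw : IdentDistrib (ξ ⟨0, hk⟩) (quantile ν) μ (volume.restrict (Ioo 0 1)) :=
    HasLaw.identDistrib ⟨(hmeas _).aemeasurable, rfl⟩ hasLaw_quantile
  have hmax := integral_sup'_eq_setIntegral_mul_quantile
    (Finset.univ_nonempty_iff.2 ⟨⟨0, hk⟩⟩) hmeas hindep hident
  rw [Fintype.card_fin] at hmax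
  have hk1 : (1 : ℝ) ≤ k := by exact_mod_cast hk
  have hw := memLp_natCast_mul_pow_pred k 2
  have hcov := covariance_le_sqrt_variance_mul hw (hlaw.memLp_snd hL2)
  rw [covariance_eq_sub hw (hlaw.memLp_snd hL2), setIntegral_Ioo_natCast_mul_pow_pred hk.ne',
    one_mul, variance_natCast_mul_pow_pred hk.ne', ← hlaw.integral_eq, ← hlaw.variance_eq,
    Real.sqrt_div' _ (by linarith), Real.sqrt_sq (by linarith)] at hcov
  rw [hmax]
  simpa only [Pi.mul_apply, sub_le_iff_le_add'] using hcov
end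

section
/- Let G be the standard adjacency matrix (entries 0 or ε) of an acyclic directed graph on n vertices with longest path length p, let 𝒯_1,…,𝒯_k be diagonal matrices 𝒯_i = diag(τ_{1i},…,τ_{ni}) with real entries τ_{ji} ≥ 0, and let A(i) = (E ⊕ 𝒯_i ⊗ G^T)^{⊗p} ⊗ 𝒯_i and A_k = A(k) ⊗ ⋯ ⊗ A(1). Then ‖A_k‖ ≥ ‖𝒯_1 + ⋯ + 𝒯_k‖ = max_{1≤j≤n} Σ_{i=1}^{k} τ_{ji}. -/
/-- The cycle transition matrix `A = (E ⊕ 𝒯 ⊗ Gᵀ)^{⊗p} ⊗ 𝒯` of an acyclic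
fork-join network with standard adjacency matrix `G`, longest path length `p`,
and service-time diagonal matrix `𝒯 = diag τ`. -/
noncomputable def mpA {n : ℕ} (G : Matrix (Fin n) (Fin n) MP) (p : ℕ)
    (τ : Fin n → ℝ) : Matrix (Fin n) (Fin n) MP :=
  mpMul (mpPow (mpAdd (mpOne n) (mpMul (diagM τ) G.transpose)) p) (diagM τ)

/-- The accumulated matrix `A_k = A(k) ⊗ ⋯ ⊗ A(1)` (here the `k`-th service
cycle uses the service times `τ (k-1)`, i.e. cycles are indexed from `0`);
`A_0 = E`. -/
noncomputable def mpAk {n : ℕ} (G : Matrix (Fin n) (Fin n) MP) (p : ℕ)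
    (τ : ℕ → Fin n → ℝ) : ℕ → Matrix (Fin n) (Fin n) MP
  | 0 => mpOne n
  | k + 1 => mpMul (mpA G p (τ k)) (mpAk G p τ k)

/-! The diagonal alone gives the bound: `E ⊕ 𝒯 ⊗ Gᵀ` has a nonnegative diagonal, hence so does
its `p`-th power, so `A(i) j j ≥ τ_{ji}`; multiplying diagonal entries along `A_k` yields
`A_k j j ≥ Σ_i τ_{ji}`. -/

lemma le_mpMul_apply {n : ℕ} (X Y : Matrix (Fin n) (Fin n) MP) (i k j : Fin n) :
    X i k + Y k j ≤ mpMul X Y i j :=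
  Finset.le_sup (f := fun k => X i k + Y k j) (Finset.mem_univ k)

lemma apply_le_mpNorm {n : ℕ} (X : Matrix (Fin n) (Fin n) MP) (i j : Fin n) :
    X i j ≤ mpNorm X :=
  (Finset.le_sup (f := fun j => X i j) (Finset.mem_univ j)).trans
    (Finset.le_sup (f := fun i => Finset.univ.sup fun j => X i j) (Finset.mem_univ i))

lemma diagM_apply_self {n : ℕ} (d : Fin n → ℝ) (j : Fin n) : diagM d j j = ((d j : ℝ) : MP) := by
  simp [diagM]

lemma zero_le_mpAdd_mpOne_apply_self {n : ℕ} (M : Matrix (Fin n) (Fin n) MP) (j : Fin n) :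
    (0 : MP) ≤ mpAdd (mpOne n) M j j := by
  simp [mpAdd, mpOne]

lemma zero_le_mpPow_apply_self {n : ℕ} {X : Matrix (Fin n) (Fin n) MP}
    (hX : ∀ j, (0 : MP) ≤ X j j) (q : ℕ) (j : Fin n) : (0 : MP) ≤ mpPow X q j j := by
  induction q with
  | zero => simp [mpPow, mpOne]
  | succ q ih =>
    calc (0 : MP) = 0 + 0 := (add_zero 0).symm
      _ ≤ X j j + mpPow X q j j := add_le_add (hX j) ih
      _ ≤ mpPow X (q + 1) j j := le_mpMul_apply _ _ j j j

lemma le_mpA_apply_self {n : ℕ} (G : Matrix (Fin n) (Fin n) MP) (p : ℕ) (τ : Fin n → ℝ)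
    (j : Fin n) : ((τ j : ℝ) : MP) ≤ mpA G p τ j j :=
  calc ((τ j : ℝ) : MP) = 0 + diagM τ j j := by rw [diagM_apply_self, zero_add]
    _ ≤ mpPow (mpAdd (mpOne n) (mpMul (diagM τ) G.transpose)) p j j + diagM τ j j :=
      add_le_add_left (zero_le_mpPow_apply_self (zero_le_mpAdd_mpOne_apply_self _) p j) _
    _ ≤ mpA G p τ j j := le_mpMul_apply _ _ j j j

lemma sum_le_mpAk_apply_self {n : ℕ} (G : Matrix (Fin n) (Fin n) MP) (p : ℕ)
    (τ : ℕ → Fin n → ℝ) (k : ℕ) (j : Fin n) :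
    ((∑ i ∈ Finset.range k, τ i j : ℝ) : MP) ≤ mpAk G p τ k j j := by
  induction k with
  | zero => simp [mpAk, mpOne]
  | succ k ih =>
    calc ((∑ i ∈ Finset.range (k + 1), τ i j : ℝ) : MP)
        = ((τ k j : ℝ) : MP) + ((∑ i ∈ Finset.range k, τ i j : ℝ) : MP) := by
          rw [Finset.sum_range_succ, add_comm, WithBot.coe_add]
      _ ≤ mpA G p (τ k) j j + mpAk G p τ k j j := add_le_add (le_mpA_apply_self G p (τ k) j) ih
      _ ≤ mpAk G p τ (k + 1) j j := le_mpMul_apply _ _ j j j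

theorem stmt11_general {n : ℕ} (G : Matrix (Fin n) (Fin n) MP) (p : ℕ) (τ : ℕ → Fin n → ℝ) (k : ℕ) :
    (Finset.univ.sup fun j : Fin n => ((∑ i ∈ Finset.range k, τ i j : ℝ) : MP))
      ≤ mpNorm (mpAk G p τ k) :=
  Finset.sup_le fun j _ => (sum_le_mpAk_apply_self G p τ k j).trans (apply_le_mpNorm _ j j)

/-- For a standard adjacency matrix `G` of an acyclic digraph with
longest path length `p` and diagonal matrices `𝒯_i` with nonnegative real
entries, `‖A_k‖ ≥ ‖𝒯_1 + ⋯ + 𝒯_k‖ = max_j Σ_{i=1}^k τ_{ji}`. -/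
theorem stmt11 {n : ℕ} (G : Matrix (Fin n) (Fin n) MP)
    (hG : ∀ i j, G i j = 0 ∨ G i j = ⊥)
    (hacyc : mpAcyclic G) (p : ℕ)
    (hub : ∀ q i j, mpPath G q i j → q ≤ p)
    (hex : ∃ i j, mpPath G p i j)
    (τ : ℕ → Fin n → ℝ) (hτ : ∀ i j, 0 ≤ τ i j) (k : ℕ) :
    (Finset.univ.sup fun j : Fin n => ((∑ i ∈ Finset.range k, τ i j : ℝ) : MP))
      ≤ mpNorm (mpAk G p τ k) :=
  stmt11_general G p τ k
end

section
/- Let G be the standard adjacency matrix of an acyclic directed graph on n vertices with longest path length p. For each k = 1,2,…, let 𝒯_k = diag(τ_{1k},…,τ_{nk}) be a random diagonal matrix whose entries τ_{ik} are nonnegative real random variables, let A(k) = (E ⊕ 𝒯_k ⊗ G^T)^{⊗p} ⊗ 𝒯_k and A_k = A(k) ⊗ ⋯ ⊗ A(1). If the random variables ‖𝒯_1‖, ‖𝒯_2‖, … (where ‖𝒯_k‖ = max_i τ_{ik}) are independent and identically distributed with finite mean and finite variance, then limsup_{k→∞} (1/k)·E[‖A_k‖] ≤ E[‖𝒯_1‖]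 = E[max_{1≤i≤n} τ_{i1}]. In particular the mean cycle time γ = lim_{k→∞} (1/k)E[‖A_k‖], whenever it exists, satisfies γ ≤ E[max_{1≤i≤n} τ_{i1}]. -/
open MeasureTheory ProbabilityTheory

open Filter Topology

namespace ForkJoin

variable {n : ℕ}

section MaxPlus

lemma mpMul_apply (X Y : Matrix (Fin n) (Fin n) MP) (i j : Fin n) :
    mpMul X Y i j = Finset.univ.sup fun k => X i k + Y k j := rfl

lemma mpAdd_apply (X Y : Matrix (Fin n) (Fin n) MP) (i j : Fin n) :
    mpAdd X Y i j = X i j ⊔ Y i j := rfl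

lemma mpOne_apply (i j : Fin n) : mpOne n i j = if i = j then (0 : MP) else ⊥ := rfl

lemma le_mpNorm (X : Matrix (Fin n) (Fin n) MP) (i j : Fin n) : X i j ≤ mpNorm X :=
  (Finset.le_sup (f := fun j => X i j) (Finset.mem_univ j)).trans
    (Finset.le_sup (f := fun i => Finset.univ.sup fun j => X i j) (Finset.mem_univ i))

lemma mpMul_apply_self_nonneg {X Y : Matrix (Fin n) (Fin n) MP} (hX : ∀ i, 0 ≤ X i i)
    (hY : ∀ i, 0 ≤ Y i i) (i : Fin n) : 0 ≤ mpMul X Y i i :=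
  calc (0 : MP) = 0 + 0 := (add_zero 0).symm
    _ ≤ X i i + Y i i := add_le_add (hX i) (hY i)
    _ ≤ mpMul X Y i i := Finset.le_sup (f := fun k => X i k + Y k i) (Finset.mem_univ i)

lemma mpOne_apply_self_nonneg (i : Fin n) : 0 ≤ mpOne n i i := by
  simp [mpOne_apply]

lemma mpPow_apply_self_nonneg {X : Matrix (Fin n) (Fin n) MP} (hX : ∀ i, 0 ≤ X i i) :
    ∀ q i, 0 ≤ mpPow X q i i
  | 0 => mpOne_apply_self_nonneg
  | q + 1 => mpMul_apply_self_nonneg hX (mpPow_apply_self_nonneg hX q)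

lemma diagM_apply_self_nonneg {d : Fin n → ℝ} (hd : ∀ i, 0 ≤ d i) (i : Fin n) :
    0 ≤ diagM d i i := by
  simpa [diagM] using hd i

end MaxPlus

def RankBound (r : Fin n → ℕ) (a b : ℝ) (X : Matrix (Fin n) (Fin n) MP) : Prop :=
  ∀ i j, X i j ≠ ⊥ → r j ≤ r i ∧ X i j ≤ ((a + ((r i : ℝ) - r j) * b : ℝ) : MP)

section RankBound

variable {r : Fin n → ℕ} {a a' b b' : ℝ} {X Y : Matrix (Fin n) (Fin n) MP}

lemma RankBound.mono (h : RankBound r a b X) (ha : a ≤ a') (hb : b ≤ b') :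
    RankBound r a' b' X := by
  intro i j hij
  obtain ⟨hr, hle⟩ := h i j hij
  refine ⟨hr, hle.trans (WithBot.coe_le_coe.2 ?_)⟩
  have : (0 : ℝ) ≤ (r i : ℝ) - r j := sub_nonneg.2 (Nat.cast_le.2 hr)
  nlinarith

lemma RankBound.mpMul (hX : RankBound r a b X) (hY : RankBound r a' b Y) :
    RankBound r (a + a') b (mpMul X Y) := by
  have hterm : ∀ i j k, X i k + Y k j ≠ ⊥ → r j ≤ r i ∧
      X i k + Y k j ≤ (((a + a') + ((r i : ℝ) - r j) * b : ℝ) : MP) := by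
    intro i j k h
    obtain ⟨hXik, hYkj⟩ := WithBot.add_ne_bot.1 h
    obtain ⟨hri, hXle⟩ := hX i k hXik
    obtain ⟨hrj, hYle⟩ := hY k j hYkj
    refine ⟨hrj.trans hri, (add_le_add hXle hYle).trans_eq ?_⟩
    rw [← WithBot.coe_add]
    ring_nf
  intro i j hij
  rw [mpMul_apply] at hij ⊢
  obtain ⟨k, hk⟩ : ∃ k, X i k + Y k j ≠ ⊥ := by
    by_contra! h
    exact hij ((Finset.sup_eq_bot_iff _ _).2 fun k _ => h k)
  refine ⟨(hterm i j k hk).1, Finset.sup_le fun l _ => ?_⟩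
  by_cases hl : X i l + Y l j = ⊥
  · exact hl ▸ bot_le
  · exact (hterm i j l hl).2

lemma RankBound.mpAdd (hX : RankBound r a b X) (hY : RankBound r a b Y) :
    RankBound r a b (mpAdd X Y) := by
  intro i j hij
  rw [mpAdd_apply] at hij ⊢
  by_cases hXij : X i j = ⊥
  · rw [hXij, bot_sup_eq] at hij ⊢
    exact hY i j hij
  by_cases hYij : Y i j = ⊥
  · rw [hYij, sup_bot_eq]
    exact hX i j hXij
  exact ⟨(hX i j hXij).1, sup_le (hX i j hXij).2 (hY i j hYij).2⟩

lemma rankBound_mpOne (r : Fin n → ℕ) (b : ℝ) : RankBound r 0 b (mpOne n) := by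
  intro i j hij
  rw [mpOne_apply] at hij ⊢
  split_ifs at hij ⊢ with h
  · subst h; simp
  · exact absurd rfl hij

lemma RankBound.mpPow (hX : RankBound r 0 b X) : ∀ q, RankBound r 0 b (mpPow X q)
  | 0 => rankBound_mpOne r b
  | q + 1 => by
    rw [_root_.mpPow]
    simpa only [zero_add] using hX.mpMul (hX.mpPow q)

lemma rankBound_diagM {d : Fin n → ℝ} (hd : ∀ i, d i ≤ a) : RankBound r a b (diagM d) := by
  intro i j hij
  simp only [diagM, Matrix.of_apply] at hij ⊢
  split_ifs at hij ⊢ with h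
  · subst h; simpa using hd i
  · exact absurd rfl hij

lemma RankBound.mpNorm_unbotD_le {p : ℕ} (h : RankBound r a b X) (ha : 0 ≤ a) (hb : 0 ≤ b)
    (hr : ∀ i, r i ≤ p) : (mpNorm X).unbotD 0 ≤ a + p * b := by
  have hab : 0 ≤ a + p * b := by positivity
  rw [WithBot.unbotD_le_iff fun _ => hab]
  refine Finset.sup_le fun i _ => Finset.sup_le fun j _ => ?_
  by_cases hij : X i j = ⊥
  · exact hij ▸ bot_le
  obtain ⟨-, hle⟩ := h i j hij
  refine hle.trans (WithBot.coe_le_coe.2 ?_)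
  have : (r i : ℝ) - r j ≤ p := by
    have := Nat.cast_le (α := ℝ).2 (hr i)
    linarith [(r j).cast_nonneg (α := ℝ)]
  nlinarith

end RankBound

section Network

variable {G : Matrix (Fin n) (Fin n) MP} {p : ℕ}

noncomputable def longestPathTo (G : Matrix (Fin n) (Fin n) MP) (i : Fin n) : ℕ :=
  sSup {q | ∃ j, mpPath G q j i}

lemma mpPath_zero (i : Fin n) : mpPath G 0 i i :=
  ⟨fun _ => i, rfl, rfl, fun _ ht => absurd ht (Nat.not_lt_zero _)⟩

lemma nonempty_pathLengths (i : Fin n) : {q | ∃ j, mpPath G q j i}.Nonempty :=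
  ⟨0, i, mpPath_zero i⟩

lemma bddAbove_pathLengths (hub : ∀ q i j, mpPath G q i j → q ≤ p) (i : Fin n) :
    BddAbove {q | ∃ j, mpPath G q j i} :=
  ⟨p, fun _ ⟨j, hq⟩ => hub _ j i hq⟩

lemma longestPathTo_le (hub : ∀ q i j, mpPath G q i j → q ≤ p) (i : Fin n) :
    longestPathTo G i ≤ p :=
  csSup_le (nonempty_pathLengths i) fun _ ⟨j, hq⟩ => hub _ j i hq

lemma exists_mpPath_longestPathTo (hub : ∀ q i j, mpPath G q i j → q ≤ p) (i : Fin n) :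
    ∃ j, mpPath G (longestPathTo G i) j i :=
  Nat.sSup_mem (nonempty_pathLengths i) (bddAbove_pathLengths hub i)

lemma mpPath_snoc {q : ℕ} {i j k : Fin n} (h : mpPath G q i j) (hjk : G j k ≠ ⊥) :
    mpPath G (q + 1) i k := by
  obtain ⟨f, hf0, hfq, hf⟩ := h
  refine ⟨fun t => if t = q + 1 then k else f t, by simp [hf0], by simp, fun t ht => ?_⟩
  rcases Nat.lt_succ_iff_lt_or_eq.1 ht with ht | rfl
  · simpa [show t ≠ q + 1 by omega, show t ≠ q by omega] using hf t ht
  · simpa [hfq] using hjk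

lemma longestPathTo_lt_of_ne_bot (hub : ∀ q i j, mpPath G q i j → q ≤ p) {l i : Fin n}
    (h : G l i ≠ ⊥) : longestPathTo G l < longestPathTo G i := by
  obtain ⟨j, hj⟩ := exists_mpPath_longestPathTo hub l
  exact le_csSup (bddAbove_pathLengths hub i) ⟨j, mpPath_snoc hj h⟩

lemma rankBound_transpose (hG : ∀ i j, G i j = 0 ∨ G i j = ⊥)
    (hub : ∀ q i j, mpPath G q i j → q ≤ p) {b : ℝ} (hb : 0 ≤ b) :
    RankBound (longestPathTo G) (-b) b G.transpose := by
  intro i j hij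
  have hlt := longestPathTo_lt_of_ne_bot hub hij
  refine ⟨hlt.le, ?_⟩
  rw [Matrix.transpose_apply, (hG j i).resolve_right hij, ← WithBot.coe_zero,
    WithBot.coe_le_coe]
  have : (1 : ℝ) ≤ (longestPathTo G i : ℝ) - longestPathTo G j := by
    rw [le_sub_iff_add_le', ← Nat.cast_succ]
    exact_mod_cast hlt
  nlinarith

lemma rankBound_mpA (hG : ∀ i j, G i j = 0 ∨ G i j = ⊥)
    (hub : ∀ q i j, mpPath G q i j → q ≤ p) {τ : Fin n → ℝ} {c : ℝ} (hτ : ∀ i, τ i ≤ c)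
    (hc : 0 ≤ c) : RankBound (longestPathTo G) c c (mpA G p τ) := by
  have hstep : RankBound (longestPathTo G) 0 c
      (mpAdd (mpOne n) (mpMul (diagM τ) G.transpose)) := by
    have := (rankBound_diagM hτ).mpMul (rankBound_transpose hG hub hc)
    rw [add_neg_cancel] at this
    exact (rankBound_mpOne _ c).mpAdd this
  simpa only [mpA, zero_add] using (hstep.mpPow p).mpMul (rankBound_diagM hτ)

lemma rankBound_mpAk (hG : ∀ i j, G i j = 0 ∨ G i j = ⊥)
    (hub : ∀ q i j, mpPath G q i j → q ≤ p) {τ : ℕ → Fin n → ℝ} {c : ℕ → ℝ} {M : ℝ}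
    (hτ : ∀ m i, τ m i ≤ c m) (hc : ∀ m, 0 ≤ c m) :
    ∀ k, (∀ m < k, c m ≤ M) →
      RankBound (longestPathTo G) (∑ m ∈ Finset.range k, c m) M (mpAk G p τ k)
  | 0, _ => by simpa [mpAk] using rankBound_mpOne (longestPathTo G) M
  | k + 1, hcM => by
    have hA := (rankBound_mpA hG hub (hτ k) (hc k)).mono le_rfl (hcM k k.lt_succ_self)
    have hAk := rankBound_mpAk hG hub hτ hc k fun m hm => hcM m (hm.trans k.lt_succ_self)
    rw [Finset.sum_range_succ, add_comm]
    exact hA.mpMul hAk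

lemma mpNorm_mpAk_unbotD_le (hG : ∀ i j, G i j = 0 ∨ G i j = ⊥)
    (hub : ∀ q i j, mpPath G q i j → q ≤ p) {τ : ℕ → Fin n → ℝ} {c : ℕ → ℝ} {M : ℝ} {k : ℕ}
    (hτ : ∀ m i, τ m i ≤ c m) (hc : ∀ m, 0 ≤ c m) (hM : 0 ≤ M) (hcM : ∀ m < k, c m ≤ M) :
    (mpNorm (mpAk G p τ k)).unbotD 0 ≤ ∑ m ∈ Finset.range k, c m + p * M :=
  (rankBound_mpAk hG hub hτ hc k hcM).mpNorm_unbotD_le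
    (Finset.sum_nonneg fun m _ => hc m) hM (longestPathTo_le hub)

lemma mpA_apply_self_nonneg {τ : Fin n → ℝ} (hτ : ∀ i, 0 ≤ τ i) (i : Fin n) :
    0 ≤ mpA G p τ i i := by
  refine mpMul_apply_self_nonneg (mpPow_apply_self_nonneg (fun j => ?_) p)
    (diagM_apply_self_nonneg hτ) i
  exact (mpOne_apply_self_nonneg j).trans le_sup_left

lemma mpAk_apply_self_nonneg {τ : ℕ → Fin n → ℝ} (hτ : ∀ m i, 0 ≤ τ m i) :
    ∀ k i, 0 ≤ mpAk G p τ k i i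
  | 0 => mpOne_apply_self_nonneg
  | k + 1 => mpMul_apply_self_nonneg (mpA_apply_self_nonneg (hτ k))
      (mpAk_apply_self_nonneg hτ k)

lemma mpNorm_mpAk_unbotD_nonneg (hn : 0 < n) {τ : ℕ → Fin n → ℝ} (hτ : ∀ m i, 0 ≤ τ m i)
    (k : ℕ) : 0 ≤ (mpNorm (mpAk G p τ k)).unbotD 0 := by
  have h := (mpAk_apply_self_nonneg (G := G) (p := p) hτ k ⟨0, hn⟩).trans (le_mpNorm _ _ _)
  rwa [WithBot.le_unbotD_iff (ne_bot_of_le_ne_bot WithBot.coe_ne_bot h)]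

end Network

section Probability

variable {Ω : Type*} [MeasurableSpace Ω] {μ : Measure Ω}

lemma integral_sum_range_comp_of_identDistrib {X : ℕ → Ω → ℝ}
    (hX : ∀ m, IdentDistrib (X m) (X 0) μ μ) {g : ℝ → ℝ} (hg : Measurable g)
    (hint : Integrable (fun ω => g (X 0 ω)) μ) (k : ℕ) :
    ∫ ω, ∑ m ∈ Finset.range k, g (X m ω) ∂μ = k * ∫ ω, g (X 0 ω) ∂μ := by
  rw [integral_finsetSum (f := fun m ω => g (X m ω)) _ fun m _ =>
      ((hX m).comp hg).integrable_iff.2 hint,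
    Finset.sum_congr (f := fun m => ∫ ω, g (X m ω) ∂μ) rfl fun m _ =>
      ((hX m).comp hg).integral_eq,
    Finset.sum_const, Finset.card_range, nsmul_eq_mul]
  rfl

lemma tendsto_integral_posPart_sub_natCast {f : Ω → ℝ} (hf : Integrable f μ) :
    Tendsto (fun c : ℕ => ∫ ω, (f ω - c)⁺ ∂μ) atTop (𝓝 0) := by
  rw [← integral_zero Ω ℝ]
  refine tendsto_integral_of_dominated_convergence (fun ω => |f ω|)
    (fun c => by fun_prop) hf.abs
    (fun c => ae_of_all _ fun ω => ?_) (ae_of_all _ fun ω => ?_)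
  · rw [Real.norm_of_nonneg (posPart_nonneg _)]
    exact max_le (by linarith [le_abs_self (f ω), c.cast_nonneg (α := ℝ)]) (abs_nonneg _)
  · refine tendsto_const_nhds.congr' ?_
    filter_upwards [(tendsto_natCast_atTop_atTop (R := ℝ)).eventually_ge_atTop (f ω)] with c hc
    exact (posPart_eq_zero.2 (sub_nonpos.2 hc)).symm

lemma limsup_le_of_le_add_add_div {u : ℕ → ℝ} (hu : ∀ k, 0 ≤ u k) {a : ℝ} {e d : ℕ → ℝ}
    (he : Tendsto e atTop (𝓝 0)) (h : ∀ c k, 1 ≤ k → u k ≤ a + e c + d c / k) :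
    limsup u atTop ≤ a := by
  have hcobdd : IsCoboundedUnder (· ≤ ·) atTop u :=
    (isBoundedUnder_of ⟨0, hu⟩).isCoboundedUnder_flip
  have hle : ∀ c, limsup u atTop ≤ a + e c := fun c => by
    have hv : Tendsto (fun k : ℕ => a + e c + d c / k) atTop (𝓝 (a + e c)) := by
      simpa using tendsto_const_nhds.add (tendsto_const_div_atTop_nhds_zero_nat (d c))
    calc limsup u atTop ≤ limsup (fun k : ℕ => a + e c + d c / k) atTop :=
          limsup_le_limsup (eventually_atTop.2 ⟨1, h c⟩) hcobdd hv.isBoundedUnder_le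
      _ = a + e c := hv.limsup_eq
  simpa using ge_of_tendsto' (tendsto_const_nhds.add he) hle

theorem limsup_integral_div_le_of_le_sum_add_mul_max [IsProbabilityMeasure μ]
    {X : ℕ → Ω → ℝ} (hX : ∀ m, IdentDistrib (X m) (X 0) μ μ) (hint : Integrable (X 0) μ)
    {f : ℕ → Ω → ℝ} (hf0 : ∀ k ω, 0 ≤ f k ω) {C : ℝ}
    (hf : ∀ k ω M, 0 ≤ M → (∀ m < k, X m ω ≤ M) →
      f k ω ≤ ∑ m ∈ Finset.range k, X m ω + C * M) :
    limsup (fun k : ℕ => (1 / (k : ℝ)) * ∫ ω, f k ω ∂μ) atTop ≤ ∫ ω, X 0 ω ∂μ := by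
  refine limsup_le_of_le_add_add_div
    (fun k => mul_nonneg (by positivity) (integral_nonneg (hf0 k)))
    (by simpa using (tendsto_integral_posPart_sub_natCast hint).const_mul C)
    (d := fun c => C * c) fun c k hk => ?_
  -- `max_{m<k} X m ≤ c + ∑_{m<k} (X m - c)⁺`, whose mean grows like `k E[(X 0 - c)⁺]`.
  set T : Ω → ℝ := fun ω => c + ∑ m ∈ Finset.range k, (X m ω - c)⁺
  have hposPart_int : Integrable (fun ω => (X 0 ω - c)⁺) μ :=
    (hint.sub (integrable_const _)).pos_part
  have hsum_int : Integrable (fun ω => ∑ m ∈ Finset.range k, (X m ω - c)⁺) μ :=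
    integrable_finsetSum _ fun m _ =>
      ((hX m).comp (u := fun x : ℝ => (x - c)⁺) (by fun_prop)).integrable_iff.2 hposPart_int
  have hS_int : Integrable (fun ω => ∑ m ∈ Finset.range k, X m ω) μ :=
    integrable_finsetSum _ fun m _ => (hX m).integrable_iff.2 hint
  have hT_int : Integrable (fun ω => C * T ω) μ :=
    ((integrable_const _).add hsum_int).const_mul C
  have hfT : ∀ ω, f k ω ≤ ∑ m ∈ Finset.range k, X m ω + C * T ω := fun ω =>
    hf k ω (T ω) (by positivity) fun m hm => by
      linarith [le_posPart (X m ω - c), Finset.single_le_sum (fun m _ => posPart_nonneg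
        (X m ω - c)) (Finset.mem_range.2 hm)]
  have hT : ∫ ω, T ω ∂μ = c + k * ∫ ω, (X 0 ω - c)⁺ ∂μ := by
    rw [integral_add (integrable_const _) hsum_int, integral_const,
      integral_sum_range_comp_of_identDistrib hX (g := fun x : ℝ => (x - c)⁺) (by fun_prop)
        hposPart_int]
    simp
  have hS : ∫ ω, ∑ m ∈ Finset.range k, X m ω ∂μ = k * ∫ ω, X 0 ω ∂μ :=
    integral_sum_range_comp_of_identDistrib hX measurable_id hint k
  have hk0 : (k : ℝ) ≠ 0 := by positivity
  calc (1 / (k : ℝ)) * ∫ ω, f k ω ∂μ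
      ≤ (1 / (k : ℝ)) * ∫ ω, ∑ m ∈ Finset.range k, X m ω + C * T ω ∂μ := by
        refine mul_le_mul_of_nonneg_left ?_ (by positivity)
        exact integral_mono_of_nonneg (ae_of_all _ (hf0 k)) (hS_int.add hT_int) (ae_of_all _ hfT)
    _ = ∫ ω, X 0 ω ∂μ + C * ∫ ω, (X 0 ω - c)⁺ ∂μ + C * c / k := by
        rw [integral_add hS_int hT_int, integral_const_mul, hT, hS]
        field_simp
        ring

end Probability

end ForkJoin

open ForkJoin

theorem stmt14_general {Ω : Type*} [MeasurableSpace Ω] (μ : Measure Ω)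
    [IsProbabilityMeasure μ] {n : ℕ} (hn : 0 < n)
    (G : Matrix (Fin n) (Fin n) MP)
    (hG : ∀ i j, G i j = 0 ∨ G i j = ⊥)
    (p : ℕ)
    (hub : ∀ q i j, mpPath G q i j → q ≤ p)
    (τ : ℕ → Fin n → Ω → ℝ)
    (hτpos : ∀ k i ω, 0 ≤ τ k i ω)
    (hmeas : ∀ k i, Measurable (τ k i))
    (N : ℕ → Ω → ℝ)
    (hN : ∀ k ω, N k ω
      = Finset.univ.sup' (Finset.univ_nonempty_iff.2 ⟨⟨0, hn⟩⟩) fun i => τ k i ω)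
    (hident : ∀ k, Measure.map (N k) μ = Measure.map (N 0) μ)
    (hL2 : MemLp (N 0) 2 μ) :
    Filter.limsup
        (fun k : ℕ => (1 / (k : ℝ)) *
          ∫ ω, (mpNorm (mpAk G p (fun m i => τ m i ω) k)).unbotD 0 ∂μ)
        Filter.atTop
      ≤ ∫ ω, N 0 ω ∂μ
    ∧ ∀ γ : ℝ,
        Filter.Tendsto
          (fun k : ℕ => (1 / (k : ℝ)) *
            ∫ ω, (mpNorm (mpAk G p (fun m i => τ m i ω) k)).unbotD 0 ∂μ)
          Filter.atTop (nhds γ) →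
        γ ≤ ∫ ω, N 0 ω ∂μ := by
  have hτN : ∀ m i ω, τ m i ω ≤ N m ω := fun m i ω =>
    (hN m ω).symm ▸ Finset.le_sup' (fun i => τ m i ω) (Finset.mem_univ i)
  have hN_nonneg : ∀ m ω, 0 ≤ N m ω := fun m ω => (hτpos m ⟨0, hn⟩ ω).trans (hτN m _ ω)
  have hN_meas : ∀ m, Measurable (N m) := fun m => by
    convert Finset.measurable_sup' _ fun i _ => hmeas m i using 1
    ext ω
    rw [hN, Finset.sup'_apply]
  have hls := limsup_integral_div_le_of_le_sum_add_mul_max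
    (fun m => ⟨(hN_meas m).aemeasurable, (hN_meas 0).aemeasurable, hident m⟩)
    (hL2.integrable one_le_two)
    (fun k ω => mpNorm_mpAk_unbotD_nonneg hn (fun m i => hτpos m i ω) k)
    fun k ω M hM hNM =>
      mpNorm_mpAk_unbotD_le hG hub (fun m i => hτN m i ω) (fun m => hN_nonneg m ω) hM hNM
  exact ⟨hls, fun γ hγ => hγ.limsup_eq ▸ hls⟩

/-- In the stochastic acyclic fork-join network model, if the
random variables `‖𝒯_k‖ = max_i τ_{ik}` are i.i.d. with finite mean and finite
variance, then `limsup_k (1/k)·E[‖A_k‖] ≤ E[‖𝒯_1‖] = E[max_i τ_{i1}]`; in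
particular the mean cycle time `γ = lim_k (1/k)·E[‖A_k‖]`, whenever it exists,
satisfies `γ ≤ E[max_i τ_{i1}]`. (Cycles are indexed from `0`; since `n ≥ 1`
and the service times are nonnegative, `‖A_k‖` is a real number, recovered from
`WithBot ℝ` via `unbot' 0`.) -/
theorem stmt14 {Ω : Type*} [MeasurableSpace Ω] (μ : Measure Ω)
    [IsProbabilityMeasure μ] {n : ℕ} (hn : 0 < n)
    (G : Matrix (Fin n) (Fin n) MP)
    (hG : ∀ i j, G i j = 0 ∨ G i j = ⊥)
    (hacyc : mpAcyclic G) (p : ℕ)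
    (hub : ∀ q i j, mpPath G q i j → q ≤ p)
    (hex : ∃ i j, mpPath G p i j)
    (τ : ℕ → Fin n → Ω → ℝ)
    (hτpos : ∀ k i ω, 0 ≤ τ k i ω)
    (hmeas : ∀ k i, Measurable (τ k i))
    (N : ℕ → Ω → ℝ)
    (hN : ∀ k ω, N k ω
      = Finset.univ.sup' (Finset.univ_nonempty_iff.2 ⟨⟨0, hn⟩⟩) fun i => τ k i ω)
    (hindep : iIndepFun (m := fun _ => (inferInstance : MeasurableSpace ℝ)) N μ)
    (hident : ∀ k, Measure.map (N k) μ = Measure.map (N 0) μ)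
    (hL2 : MemLp (N 0) 2 μ) :
    Filter.limsup
        (fun k : ℕ => (1 / (k : ℝ)) *
          ∫ ω, (mpNorm (mpAk G p (fun m i => τ m i ω) k)).unbotD 0 ∂μ)
        Filter.atTop
      ≤ ∫ ω, N 0 ω ∂μ
    ∧ ∀ γ : ℝ,
        Filter.Tendsto
          (fun k : ℕ => (1 / (k : ℝ)) *
            ∫ ω, (mpNorm (mpAk G p (fun m i => τ m i ω) k)).unbotD 0 ∂μ)
          Filter.atTop (nhds γ) →
        γ ≤ ∫ ω, N 0 ω ∂μ :=
  stmt14_general μ hn G hG p hub τ hτpos hmeas N hN hident hL2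
end
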